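/- arXiv:1605.00409 — 2 statements merged into one kernel-verified Lean document; each statement's English description precedes it below -/
import Mathlib

section
/- Consider the optimization max over (s̃_A, s̃_1, …, s̃_n, z̃) of s̃_A + Σ_{j=1}^n s̃_j subject to s̃_j ≤ log s_j + z̃ − log(T_on + c₁ + e^{z̃}) for each j and s̃_A ≤ log q − log(T_on + c₁ + e^{z̃}), where s_j > 0, q > 0, T_on > 0, c₁ ≥ 0 are constants. At any optimum, e^{z̃*}/(T_on + c₁ + e^{z̃*}) = n/(n+1). -/
/-!
With `T = T_on + c₁`, the objective at a feasible point with parameter `z` is at most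
`∑ log s_j + log q + (n z - (n+1) log (T + e^z))`, with equality when every constraint is tight.
Hence an optimal `z` maximises `n log u - (n+1) log (T + u)` over `u = e^z > 0`. By strict
concavity of `log` with weights `n/(n+1)` and `1/(n+1)`, this function has its unique maximum
at `u = nT`, whence `e^z / (T + e^z) = n/(n+1)`.
-/

open Real Finset

lemma mul_log_sub_mul_log_add_lt {N T u : ℝ} (hN : 0 < N) (hT : 0 < T) (hu : 0 < u)
    (hne : u ≠ N * T) :
    N * log u - (N + 1) * log (T + u) < N * log (N * T) - (N + 1) * log (T + N * T) := by
  have hNT : 0 < N * T := by positivity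
  have hv1 : u / (N * T) ≠ 1 := fun h => hne ((div_eq_one_iff_eq hNT.ne').1 h)
  have hconc := strictConcaveOn_log_Ioi.2 (Set.mem_Ioi.2 (div_pos hu hNT)) (Set.mem_Ioi.2 one_pos)
    hv1 (show 0 < N / (N + 1) by positivity) (show 0 < 1 / (N + 1) by positivity)
    (by field_simp)
  have hmix : N / (N + 1) * (u / (N * T)) + 1 / (N + 1) * 1 = (T + u) / (T + N * T) := by
    field_simp
    ring
  rw [smul_eq_mul, smul_eq_mul, smul_eq_mul, smul_eq_mul, hmix, Real.log_one, mul_zero, add_zero,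
    log_div hu.ne' hNT.ne', log_div (by positivity) (by positivity), div_mul_eq_mul_div, div_lt_iff₀' (by positivity)] at hconc
  linarith

lemma exp_eq_mul_of_forall_le {N T z : ℝ} (hN : 0 < N) (hT : 0 < T)
    (hmax : ∀ z', N * z' - (N + 1) * log (T + exp z') ≤ N * z - (N + 1) * log (T + exp z)) :
    exp z = N * T := by
  by_contra hne
  have hlt := mul_log_sub_mul_log_add_lt hN hT (exp_pos z) hne
  have hle := hmax (log (N * T))
  rw [exp_log (by positivity)] at hle
  rw [log_exp] at hlt
  linarith

theorem prop_fair_optimum_airtime_general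
    (n : ℕ) (hn : 1 ≤ n) (s : Fin n → ℝ)
    (q Ton c₁ : ℝ) (hTon : 0 < Ton) (hc₁ : 0 ≤ c₁)
    (feasible : (ℝ × (Fin n → ℝ) × ℝ) → Prop)
    (hfeas : ∀ p : ℝ × (Fin n → ℝ) × ℝ, feasible p ↔
      ((∀ j, p.2.1 j ≤ Real.log (s j) + p.2.2 -
          Real.log (Ton + c₁ + Real.exp p.2.2)) ∧
        p.1 ≤ Real.log q - Real.log (Ton + c₁ + Real.exp p.2.2)))
    (sA : ℝ) (sc : Fin n → ℝ) (z : ℝ)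
    (hopt : feasible (sA, sc, z) ∧
      ∀ p : ℝ × (Fin n → ℝ) × ℝ, feasible p →
        p.1 + ∑ j, p.2.1 j ≤ sA + ∑ j, sc j) :
    Real.exp z / (Ton + c₁ + Real.exp z) = (n : ℝ) / (n + 1) := by
  obtain ⟨hzfeas, hzmax⟩ := hopt
  obtain ⟨hsc, hsA⟩ := (hfeas _).1 hzfeas
  set T := Ton + c₁
  have hT : 0 < T := by positivity
  have hsum (w : ℝ) : ∑ j, (log (s j) + w - log (T + exp w)) =
      ∑ j, log (s j) + n * w - n * log (T + exp w) := by
    simp only [sum_sub_distrib, sum_add_distrib, sum_const, card_univ, Fintype.card_fin,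
      nsmul_eq_mul]
  have hmax (z' : ℝ) :
      n * z' - (n + 1) * log (T + exp z') ≤ n * z - (n + 1) * log (T + exp z) := by
    have htight := hzmax (log q - log (T + exp z'), fun j => log (s j) + z' - log (T + exp z'), z')
      ((hfeas _).2 ⟨fun _ => le_rfl, le_rfl⟩)
    have hsc_sum := sum_le_sum fun j (_ : j ∈ univ) => hsc j
    rw [hsum] at htight hsc_sum
    linarith
  rw [exp_eq_mul_of_forall_le (by exact_mod_cast hn) hT hmax]
  field_simp
  ring

/-- Proportional fair rate allocation: at any maximiser of
`s̃_A + ∑ s̃_j` subject to the throughput constraints, the airtime fraction of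
full CSMA/CA MAC slots `exp z* / (T_on + c₁ + exp z*)` equals `n/(n+1)`. -/
theorem prop_fair_optimum_airtime
    (n : ℕ) (hn : 1 ≤ n) (s : Fin n → ℝ) (hs : ∀ j, 0 < s j)
    (q Ton c₁ : ℝ) (hq : 0 < q) (hTon : 0 < Ton) (hc₁ : 0 ≤ c₁)
    (feasible : (ℝ × (Fin n → ℝ) × ℝ) → Prop)
    (hfeas : ∀ p : ℝ × (Fin n → ℝ) × ℝ, feasible p ↔
      ((∀ j, p.2.1 j ≤ Real.log (s j) + p.2.2 -
          Real.log (Ton + c₁ + Real.exp p.2.2)) ∧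
        p.1 ≤ Real.log q - Real.log (Ton + c₁ + Real.exp p.2.2)))
    (sA : ℝ) (sc : Fin n → ℝ) (z : ℝ)
    (hopt : feasible (sA, sc, z) ∧
      ∀ p : ℝ × (Fin n → ℝ) × ℝ, feasible p →
        p.1 + ∑ j, p.2.1 j ≤ sA + ∑ j, sc j) :
    Real.exp z / (Ton + c₁ + Real.exp z) = (n : ℝ) / (n + 1) :=
  prop_fair_optimum_airtime_general n hn s q Ton c₁ hTon hc₁ feasible hfeas sA sc z hopt
end

section
/- Consider the utility-fair optimization with unsaturated stations: maximize s̃_A + Σ_j s̃_j subject to s̃_A ≤ log q − log(T_on + c₁ + e^{z̃}), s̃_j ≤ x̃_j + K_j + z̃ − log(T_on + c₁ + e^{z̃}), s̃_j ≤ b̃_j, and log Π_j (1 + e^{x̃_j}) ≤ −log p̄_e. If the set C of stations with s̃_j* < b̃_j at the optimum is nonempty, then the last constraint is tight at the optimum: Π_j (1 + e^{x̃_j*}) = 1/p̄_e. -/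
/-- Lemma 1: in the unsaturated utility-fair optimisation, if some station's
load constraint is slack at the optimum, then the idle-probability constraint
is tight: `∏ j (1 + exp x̃_j*) = 1/p̄_e`. -/
theorem idle_constraint_tight_at_optimum
    (n : ℕ) (hn : 1 ≤ n) (q Ton c₁ pe : ℝ)
    (hq : 0 < q) (hTon : 0 < Ton) (hc₁ : 0 ≤ c₁) (hpe : pe ∈ Set.Ioo (0 : ℝ) 1)
    (K b : Fin n → ℝ)
    (feasible : (ℝ × (Fin n → ℝ) × (Fin n → ℝ) × ℝ) → Prop)
    (hfeas : ∀ p : ℝ × (Fin n → ℝ) × (Fin n → ℝ) × ℝ, feasible p ↔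
      (p.1 ≤ Real.log q - Real.log (Ton + c₁ + Real.exp p.2.2.2) ∧
       (∀ j, p.2.1 j ≤ p.2.2.1 j + K j + p.2.2.2 -
          Real.log (Ton + c₁ + Real.exp p.2.2.2)) ∧
       (∀ j, p.2.1 j ≤ b j) ∧
       Real.log (∏ j, (1 + Real.exp (p.2.2.1 j))) ≤ - Real.log pe))
    (sA : ℝ) (s : Fin n → ℝ) (x : Fin n → ℝ) (z : ℝ)
    (hopt : feasible (sA, s, x, z) ∧
      ∀ p : ℝ × (Fin n → ℝ) × (Fin n → ℝ) × ℝ, feasible p →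
        p.1 + ∑ j, p.2.1 j ≤ sA + ∑ j, s j)
    (hC : ∃ j, s j < b j) :
    ∏ j, (1 + Real.exp (x j)) = 1 / pe := by
  obtain ⟨hfeas0, hmax⟩ := hopt
  obtain ⟨h1, h2, h3, h4⟩ := (hfeas _).mp hfeas0
  simp only at h1 h2 h3 h4
  set P := ∏ j, (1 + Real.exp (x j)) with hP
  have hPpos : 0 < P := Finset.prod_pos (fun j _ => by positivity)
  have hpepos : 0 < pe := hpe.1
  have hPle : P ≤ pe⁻¹ := by
    rw [← Real.log_inv] at h4
    exact (Real.log_le_log_iff hPpos (by positivity)).mp h4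
  rcases eq_or_lt_of_le hPle with heq | hlt
  · rw [one_div]; exact heq
  · exfalso
    obtain ⟨j₀, hj₀⟩ := hC
    set r := pe⁻¹ / P with hr
    have hr1 : 1 < r := (one_lt_div hPpos).mpr hlt
    have hrpos : 0 < r := lt_trans one_pos hr1
    set ε := Real.log r with hε
    have hεpos : 0 < ε := Real.log_pos hr1
    set δ := min ε (b j₀ - s j₀) with hδ
    have hδpos : 0 < δ := lt_min hεpos (by linarith)
    set x' := Function.update x j₀ (x j₀ + ε) with hx'
    set s' := Function.update s j₀ (s j₀ + δ) with hs'
    have hprod : ∏ j, (1 + Real.exp (x' j)) =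
        (1 + Real.exp (x j₀ + ε)) * ∏ j ∈ (Finset.univ \ {j₀}), (1 + Real.exp (x j)) := by
      have hfun : (fun j => 1 + Real.exp (x' j)) =
          Function.update (fun j => 1 + Real.exp (x j)) j₀ (1 + Real.exp (x j₀ + ε)) := by
        funext j
        by_cases hj : j = j₀
        · subst hj; simp [hx']
        · simp [hx', Function.update_of_ne hj]
      calc ∏ j, (1 + Real.exp (x' j))
          = ∏ j, Function.update (fun j => 1 + Real.exp (x j)) j₀
              (1 + Real.exp (x j₀ + ε)) j := by rw [hfun]
        _ = _ := Finset.prod_update_of_mem (Finset.mem_univ j₀) _ _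
    have hPsplit : P = (1 + Real.exp (x j₀)) * ∏ j ∈ (Finset.univ \ {j₀}), (1 + Real.exp (x j)) := by
      rw [Finset.sdiff_singleton_eq_erase]
      exact (Finset.mul_prod_erase _ _ (Finset.mem_univ j₀)).symm
    have hQpos : 0 < ∏ j ∈ (Finset.univ \ {j₀}), (1 + Real.exp (x j)) :=
      Finset.prod_pos (fun j _ => by positivity)
    have hfeas' : feasible (sA, s', x', z) := by
      rw [hfeas]
      refine ⟨h1, ?_, ?_, ?_⟩
      · intro j
        by_cases hj : j = j₀
        · rw [hj]
          simp only [hs', hx', Function.update_self]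
          have h2' := h2 j₀
          have hde : δ ≤ ε := min_le_left _ _
          linarith
        · simp only [hs', hx', Function.update_of_ne hj]
          exact h2 j
      · intro j
        by_cases hj : j = j₀
        · rw [hj]
          simp only [hs', Function.update_self]
          have : δ ≤ b j₀ - s j₀ := min_le_right _ _
          linarith
        · simp only [hs', Function.update_of_ne hj]; exact h3 j
      · show Real.log (∏ j, (1 + Real.exp (x' j))) ≤ - Real.log pe
        have hexp : Real.exp (x j₀ + ε) = Real.exp (x j₀) * r := by
          rw [Real.exp_add, hε, Real.exp_log hrpos]
        have hfac : 1 + Real.exp (x j₀ + ε) ≤ r * (1 + Real.exp (x j₀)) := by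
          rw [hexp]
          nlinarith [Real.exp_pos (x j₀)]
        have hle : ∏ j, (1 + Real.exp (x' j)) ≤ pe⁻¹ := by
          rw [hprod]
          have : (1 + Real.exp (x j₀ + ε)) * ∏ j ∈ (Finset.univ \ {j₀}), (1 + Real.exp (x j))
              ≤ (r * (1 + Real.exp (x j₀))) * ∏ j ∈ (Finset.univ \ {j₀}), (1 + Real.exp (x j)) :=
            mul_le_mul_of_nonneg_right hfac (le_of_lt hQpos)
          calc (1 + Real.exp (x j₀ + ε)) * ∏ j ∈ (Finset.univ \ {j₀}), (1 + Real.exp (x j))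
              ≤ (r * (1 + Real.exp (x j₀))) * ∏ j ∈ (Finset.univ \ {j₀}), (1 + Real.exp (x j)) := this
            _ = r * P := by rw [hPsplit]; ring
            _ = pe⁻¹ := by rw [hr, div_mul_cancel₀ _ (ne_of_gt hPpos)]
        have hpos' : 0 < ∏ j, (1 + Real.exp (x' j)) :=
          Finset.prod_pos (fun j _ => by positivity)
        rw [← Real.log_inv]
        exact Real.log_le_log hpos' hle
    have hbound := hmax _ hfeas'
    simp only at hbound
    have hsum : ∑ j, s' j = (s j₀ + δ) + ∑ j ∈ (Finset.univ \ {j₀}), s j :=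
      Finset.sum_update_of_mem (Finset.mem_univ j₀) _ _
    have hsum0 : ∑ j, s j = s j₀ + ∑ j ∈ (Finset.univ \ {j₀}), s j := by
      rw [Finset.sdiff_singleton_eq_erase]
      exact (Finset.add_sum_erase _ _ (Finset.mem_univ j₀)).symm
    have : ∑ j, s' j = δ + ∑ j, s j := by rw [hsum, hsum0]; ring
    rw [this] at hbound
    linarith
end
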